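/- Let K1 be a compact subset of a Banach space X and V a compact subset of C(K1). Then for any ε > 0 there exist finitely many points η_1, …, η_m ∈ K1 such that the evaluation map v ↦ (v(η_1), …, v(η_m)) from V into ℝ^m is injective up to ε, i.e., for all v, w ∈ V, if v(η_i) = w(η_i) for all i then sup_{x ∈ K1} |v(x) − w(x)| < ε. -/
import Mathlib


theorem stmt0
    (X : Type*) [NormedAddCommGroup X] [NormedSpace ℝ X] [CompleteSpace X]
    (K1 : Set X) [CompactSpace K1]
    (V : Set C(K1, ℝ)) (hV : IsCompact V)
    (ε : ℝ) (hε : 0 < ε) :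
    ∃ (m : ℕ) (η : Fin m → K1),
      ∀ v ∈ V, ∀ w ∈ V, (∀ i, v (η i) = w (η i)) → ‖v - w‖ < ε := by
  by_cases hK : Nonempty K1
  · obtain ⟨t, htf, htsub⟩ :=
      (Metric.totallyBounded_iff.mp hV.totallyBounded) (ε/8) (by linarith)
    have hmax : ∀ f : C(K1, ℝ), ∃ x : K1, ‖f‖ = ‖f x‖ := by
      intro f
      haveI := hK
      obtain ⟨x, -, hx⟩ := isCompact_univ.exists_isMaxOn Set.univ_nonempty
        (continuous_norm.comp f.continuous).continuousOn
      exact ⟨x, le_antisymm ((ContinuousMap.norm_le _ (norm_nonneg _)).mpr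
        (fun y => hx (Set.mem_univ y))) (f.norm_coe_le_norm x)⟩
    choose pt hpt using hmax
    haveI : Fintype t := htf.fintype
    classical
    let T : Finset C(K1, ℝ) := htf.toFinset
    let s : Finset K1 := (T ×ˢ T).image (fun p => pt (p.1 - p.2))
    refine ⟨s.card, fun i => (s.equivFin.symm i : K1), ?_⟩
    intro v hv w hw hvw
    have key : ∀ x ∈ s, v x = w x := by
      intro x hx
      have := hvw (s.equivFin ⟨x, hx⟩)
      simpa using this
    obtain ⟨f, hf, hvf⟩ := Set.mem_iUnion₂.mp (htsub hv)
    obtain ⟨g, hg, hwg⟩ := Set.mem_iUnion₂.mp (htsub hw)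
    have hps : pt (f - g) ∈ s := by
      refine Finset.mem_image.mpr ⟨(f, g), ?_, rfl⟩
      simp [T, Finset.mem_product, htf.mem_toFinset, hf, hg]
    set p := pt (f - g) with hp
    have hvwp : v p = w p := key p hps
    have hvfd : dist v f < ε/8 := Metric.mem_ball.mp hvf
    have hwgd : dist w g < ε/8 := Metric.mem_ball.mp hwg
    have h1 : ‖f p - v p‖ ≤ dist v f := by
      rw [dist_eq_norm]
      have := ContinuousMap.norm_coe_le_norm (v - f) p
      simpa [norm_sub_rev] using this
    have h2 : ‖w p - g p‖ ≤ dist w g := by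
      rw [dist_eq_norm]
      have := ContinuousMap.norm_coe_le_norm (w - g) p
      simpa using this
    have hfg : ‖f - g‖ < ε/4 := by
      rw [hpt (f - g)]
      rw [ContinuousMap.sub_apply]
      calc ‖f p - g p‖ ≤ ‖f p - v p‖ + ‖w p - g p‖ := by
            rw [show f p - g p = (f p - v p) + (w p - g p) by rw [hvwp]; ring]
            exact norm_add_le _ _
        _ < ε/8 + ε/8 := by
            exact add_lt_add (lt_of_le_of_lt h1 hvfd) (lt_of_le_of_lt h2 hwgd)
        _ = ε/4 := by ring
    calc ‖v - w‖ ≤ ‖v - f‖ + ‖f - g‖ + ‖g - w‖ := by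
          have := norm_add₃_le (a := v - f) (b := f - g) (c := g - w)
          simpa using this
      _ < ε/8 + ε/4 + ε/8 := by
          refine add_lt_add (add_lt_add ?_ hfg) ?_
          · rw [← dist_eq_norm]; exact hvfd
          · rw [← dist_eq_norm, dist_comm]; exact hwgd
      _ < ε := by linarith
  · refine ⟨0, fun i => i.elim0, ?_⟩
    intro v _ w _ _
    have : v - w = 0 := ContinuousMap.ext fun x => absurd ⟨x⟩ hK
    simpa [this] using hε
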